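/- Let A be the category whose objects are subspatial equivalence spans on T0 topological spaces and whose morphisms are graph homomorphisms (pairs of continuous maps commuting with sources and targets). Let 𝕀 be the interval-like groupoid: the subspatial equivalence span with I0 = {0, 1} discrete and I1 = I0 × I0 with the projections. Then the category Equ of equilogical spaces is equivalent to the homotopical quotient of A by 𝕀, i.e. to the quotient category of A by the congruence identifying homomorphisms (f1, f0) and (g1, g0) : A → B whenever there exists a homomorphism (K1, K0) : A × 𝕀 → B with K0(x, 0) = f0(x), K0(x, 1) = g0(x), K1(a, (0, 0)) = f1(a) and K1(a, (1, 1)) = g1(a). -/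

import Mathlib

open CategoryTheory Topology

/-- An equilogical space: a T0 topological space together with an equivalence
relation on its points. -/
structure EquSpace : Type 1 where
  carrier : Type
  [top : TopologicalSpace carrier]
  [t0 : T0Space carrier]
  eqv : Setoid carrier

attribute [instance] EquSpace.top EquSpace.t0

/-- A representative of a map of equilogical spaces: a continuous function
preserving the equivalence relations. -/
structure EquHomRep (E F : EquSpace) : Type where
  toFun : E.carrier → F.carrier
  continuous : Continuous toFun
  preserves : ∀ x y : E.carrier, E.eqv.r x y → F.eqv.r (toFun x) (toFun y)

/-- Two representatives are equivalent when they are pointwise related. -/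
def equHomSetoid (E F : EquSpace) : Setoid (EquHomRep E F) where
  r f g := ∀ x : E.carrier, F.eqv.r (f.toFun x) (g.toFun x)
  iseqv := by
    constructor
    · intro f x; exact F.eqv.refl _
    · intro f g h x; exact F.eqv.symm (h x)
    · intro f g h hfg hgh x; exact F.eqv.trans (hfg x) (hgh x)

/-- The identity representative. -/
def EquHomRep.id (E : EquSpace) : EquHomRep E E :=
  ⟨fun x => x, continuous_id, fun _ _ h => h⟩

/-- Composition of representatives. -/
def EquHomRep.comp {E F G : EquSpace} (f : EquHomRep E F) (g : EquHomRep F G) :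
    EquHomRep E G :=
  ⟨fun x => g.toFun (f.toFun x), g.continuous.comp f.continuous,
    fun _ _ h => g.preserves _ _ (f.preserves _ _ h)⟩

/-- The category `Equ` of equilogical spaces: maps are equivalence classes of
relation-preserving continuous functions. -/
instance : Category EquSpace where
  Hom E F := Quotient (equHomSetoid E F)
  id E := ⟦EquHomRep.id E⟧
  comp {E F G} f g :=
    Quotient.liftOn₂ f g (fun f g => ⟦f.comp g⟧) (by
      intro f g f' g' hf hg
      apply Quotient.sound
      intro x
      exact G.eqv.trans (hg _) (g'.preserves _ _ (hf x)))
  id_comp f := Quotient.inductionOn f fun _ => rfl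
  comp_id f := Quotient.inductionOn f fun _ => rfl
  assoc f g h := Quotient.inductionOn₃ f g h fun _ _ _ => rfl

/-- The structure maps making `d1, d2 : A1 → A0` an equivalence span of
topological spaces. -/
structure SpanStruct {A1 A0 : Type} [TopologicalSpace A1] [TopologicalSpace A0]
    (d1 d2 : A1 → A0) where
  r : A0 → A1
  s : A1 → A1
  t : {p : A1 × A1 // d2 p.1 = d1 p.2} → A1
  cont_r : Continuous r
  cont_s : Continuous s
  cont_t : Continuous t
  d1_r : ∀ x, d1 (r x) = x
  d2_r : ∀ x, d2 (r x) = x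
  d1_s : ∀ a, d1 (s a) = d2 a
  d2_s : ∀ a, d2 (s a) = d1 a
  d1_t : ∀ p, d1 (t p) = d1 p.1.1
  d2_t : ∀ p, d2 (t p) = d2 p.1.2

/-- An object of the category `A`: a subspatial equivalence span on T0
topological spaces. -/
structure SubSpanCat : Type 1 where
  A0 : Type
  A1 : Type
  [top0 : TopologicalSpace A0]
  [top1 : TopologicalSpace A1]
  [t0s0 : T0Space A0]
  [t0s1 : T0Space A1]
  d1 : A1 → A0
  d2 : A1 → A0
  cd1 : Continuous d1
  cd2 : Continuous d2
  emb : IsEmbedding fun a => (d1 a, d2 a)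
  str : SpanStruct d1 d2

attribute [instance] SubSpanCat.top0 SubSpanCat.top1 SubSpanCat.t0s0 SubSpanCat.t0s1

/-- A graph homomorphism of spans: a pair of continuous maps commuting with
sources and targets. -/
structure SpanHom (A B : SubSpanCat) : Type where
  f0 : A.A0 → B.A0
  f1 : A.A1 → B.A1
  cont0 : Continuous f0
  cont1 : Continuous f1
  comm1 : ∀ a, B.d1 (f1 a) = f0 (A.d1 a)
  comm2 : ∀ a, B.d2 (f1 a) = f0 (A.d2 a)

/-- The category `A` of subspatial equivalence spans on T0 spaces and graph
homomorphisms. -/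
instance : Category SubSpanCat where
  Hom A B := SpanHom A B
  id A := ⟨fun x => x, fun a => a, continuous_id, continuous_id,
    fun _ => rfl, fun _ => rfl⟩
  comp {A B C} f g :=
    ⟨fun x => g.f0 (f.f0 x), fun a => g.f1 (f.f1 a),
      g.cont0.comp f.cont0, g.cont1.comp f.cont1,
      fun a => (g.comm1 (f.f1 a)).trans (congrArg g.f0 (f.comm1 a)),
      fun a => (g.comm2 (f.f1 a)).trans (congrArg g.f0 (f.comm2 a))⟩

/-- The interval-like groupoid `𝕀`: two objects, exactly one arrow between any
pair of objects, everything discrete. -/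
def interval : SubSpanCat where
  A0 := Bool
  A1 := Bool × Bool
  d1 := Prod.fst
  d2 := Prod.snd
  cd1 := continuous_fst
  cd2 := continuous_snd
  emb := IsEmbedding.id
  str :=
    { r := fun x => (x, x)
      s := fun p => (p.2, p.1)
      t := fun p => (p.1.1.1, p.1.2.2)
      cont_r := continuous_of_discreteTopology
      cont_s := continuous_of_discreteTopology
      cont_t := continuous_of_discreteTopology
      d1_r := fun _ => rfl
      d2_r := fun _ => rfl
      d1_s := fun _ => rfl
      d2_s := fun _ => rfl
      d1_t := fun _ => rfl
      d2_t := fun _ => rfl }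

/-- The componentwise product span `A × 𝕀`. -/
def prodInterval (A : SubSpanCat) : SubSpanCat where
  A0 := A.A0 × Bool
  A1 := A.A1 × (Bool × Bool)
  d1 := fun p => (A.d1 p.1, p.2.1)
  d2 := fun p => (A.d2 p.1, p.2.2)
  cd1 := (A.cd1.comp continuous_fst).prodMk (continuous_fst.comp continuous_snd)
  cd2 := (A.cd2.comp continuous_fst).prodMk (continuous_snd.comp continuous_snd)
  emb := by
    have h := (Homeomorph.prodProdProdComm A.A0 A.A0 Bool Bool).isEmbedding.comp
      (A.emb.prodMap (IsEmbedding.id (X := Bool × Bool)))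
    convert h using 2
    all_goals rfl
  str :=
    { r := fun p => (A.str.r p.1, (p.2, p.2))
      s := fun q => (A.str.s q.1, (q.2.2, q.2.1))
      t := fun p =>
        (A.str.t ⟨(p.1.1.1, p.1.2.1), congrArg Prod.fst p.2⟩,
          (p.1.1.2.1, p.1.2.2.2))
      cont_r := (A.str.cont_r.comp continuous_fst).prodMk
        (continuous_snd.prodMk continuous_snd)
      cont_s := (A.str.cont_s.comp continuous_fst).prodMk
        ((continuous_snd.comp continuous_snd).prodMk
          (continuous_fst.comp continuous_snd))
      cont_t := by
        have hval : Continuous fun p : {p : (A.A1 × (Bool × Bool)) × (A.A1 × (Bool × Bool)) //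
            (A.d2 p.1.1, p.1.2.2) = (A.d1 p.2.1, p.2.2.1)} =>
            (p : (A.A1 × (Bool × Bool)) × (A.A1 × (Bool × Bool))) :=
          continuous_subtype_val
        exact (A.str.cont_t.comp
          (((hval.fst.fst).prodMk (hval.snd.fst)).subtype_mk _)).prodMk
          ((hval.fst.snd.fst).prodMk (hval.snd.snd.snd))
      d1_r := fun p => by show (A.d1 (A.str.r p.1), p.2) = p; rw [A.str.d1_r]
      d2_r := fun p => by show (A.d2 (A.str.r p.1), p.2) = p; rw [A.str.d2_r]
      d1_s := fun q => by show (A.d1 (A.str.s q.1), q.2.2) = _; rw [A.str.d1_s]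
      d2_s := fun q => by show (A.d2 (A.str.s q.1), q.2.1) = _; rw [A.str.d2_s]
      d1_t := fun p => by
        show (A.d1 (A.str.t _), p.1.1.2.1) = (A.d1 p.1.1.1, p.1.1.2.1)
        rw [A.str.d1_t]
      d2_t := fun p => by
        show (A.d2 (A.str.t _), p.1.2.2.2) = (A.d2 p.1.2.1, p.1.2.2.2)
        rw [A.str.d2_t] }

/-- The homotopy relation determined by the interval `𝕀`: two homomorphisms
`f, g : A ⟶ B` are identified when there is a homomorphism
`K : A × 𝕀 ⟶ B` restricting to `f` at `0` and to `g` at `1`, on objects and on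
arrows. -/
def htpyRel : HomRel SubSpanCat := fun {A B} f g =>
  ∃ K : prodInterval A ⟶ B,
    (∀ x : A.A0, K.f0 (x, false) = f.f0 x) ∧
    (∀ x : A.A0, K.f0 (x, true) = g.f0 x) ∧
    (∀ a : A.A1, K.f1 (a, (false, false)) = f.f1 a) ∧
    (∀ a : A.A1, K.f1 (a, (true, true)) = g.f1 a)

/-!
A span `A` presents the equilogical space `(A₀, ∼)` where `x ∼ y` iff some arrow of `A` joins
`x` to `y`; an equilogical space `E` presents the span of its related pairs. Because `A` is
subspatial, an arrow is determined, continuously, by its endpoints, so `A` is isomorphic to the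
span of related pairs of its own relation, while `E` is recovered on the nose.

On maps, a homotopy `K : A × 𝕀 ⟶ B` from `f` to `g` contains the arrow `K₁(r x, (0, 1))` from
`f₀ x` to `g₀ x`, so homotopic homomorphisms induce the same map of equilogical spaces.
Conversely, if `f ∼ g` pointwise, the map equal to `f` on the `0`-end and `g` on the `1`-end is a
homotopy between the induced homomorphisms: it is continuous since `𝕀` is discrete.
-/

theorem SpanHom.ext {A B : SubSpanCat} {f g : SpanHom A B}
    (h0 : f.f0 = g.f0) (h1 : f.f1 = g.f1) : f = g := by
  cases f; cases g; cases h0; cases h1; rfl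

namespace SubSpanCat

variable (A : SubSpanCat)

def rel : Setoid A.A0 where
  r x y := ∃ a, A.d1 a = x ∧ A.d2 a = y
  iseqv.refl x := ⟨A.str.r x, A.str.d1_r x, A.str.d2_r x⟩
  iseqv.symm := by
    rintro x y ⟨a, rfl, rfl⟩
    exact ⟨A.str.s a, A.str.d1_s a, A.str.d2_s a⟩
  iseqv.trans := by
    rintro x y z ⟨a, rfl, rfl⟩ ⟨b, hb, rfl⟩
    exact ⟨A.str.t ⟨(a, b), hb.symm⟩, A.str.d1_t _, A.str.d2_t _⟩

def toEquSpace : EquSpace where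
  carrier := A.A0
  eqv := A.rel

end SubSpanCat

def SpanHom.toEquHomRep {A B : SubSpanCat} (h : SpanHom A B) :
    EquHomRep A.toEquSpace B.toEquSpace where
  toFun := h.f0
  continuous := h.cont0
  preserves := by
    rintro x y ⟨a, rfl, rfl⟩
    exact ⟨h.f1 a, h.comm1 a, h.comm2 a⟩

def spanToEqu : SubSpanCat ⥤ EquSpace where
  obj := SubSpanCat.toEquSpace
  map h := ⟦SpanHom.toEquHomRep h⟧

theorem htpyRel.rel_f0 {A B : SubSpanCat} {f g : A ⟶ B} (hfg : htpyRel f g) (x : A.A0) :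
    B.rel (f.f0 x) (g.f0 x) := by
  obtain ⟨K, h0, h1, -, -⟩ := hfg
  refine ⟨K.f1 (A.str.r x, (false, true)), ?_, ?_⟩
  · calc B.d1 (K.f1 _) = K.f0 (A.d1 (A.str.r x), false) := K.comm1 _
      _ = f.f0 x := by rw [A.str.d1_r, h0]
  · calc B.d2 (K.f1 _) = K.f0 (A.d2 (A.str.r x), true) := K.comm2 _
      _ = g.f0 x := by rw [A.str.d2_r, h1]

theorem spanToEqu_map_eq_of_htpyRel ⦃A B : SubSpanCat⦄ (f g : A ⟶ B) (hfg : htpyRel f g) :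
    spanToEqu.map f = spanToEqu.map g :=
  Quotient.sound hfg.rel_f0

namespace EquSpace

variable (E : EquSpace)

abbrev RelPairs : Type := { p : E.carrier × E.carrier // E.eqv.r p.1 p.2 }

def toSubSpan : SubSpanCat where
  A0 := E.carrier
  A1 := E.RelPairs
  d1 a := a.1.1
  d2 a := a.1.2
  cd1 := continuous_subtype_val.fst
  cd2 := continuous_subtype_val.snd
  emb := IsEmbedding.subtypeVal
  str :=
    { r x := ⟨(x, x), E.eqv.refl x⟩
      s a := ⟨(a.1.2, a.1.1), E.eqv.symm a.2⟩
      t p := ⟨(p.1.1.1.1, p.1.2.1.2), E.eqv.trans p.1.1.2 (p.2 ▸ p.1.2.2)⟩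
      cont_r := (continuous_id.prodMk continuous_id).subtype_mk _
      cont_s := (continuous_subtype_val.snd.prodMk continuous_subtype_val.fst).subtype_mk _
      cont_t := by
        have hv : Continuous fun p : { q : E.RelPairs × E.RelPairs // q.1.1.2 = q.2.1.1 } =>
            p.1 := continuous_subtype_val
        exact (hv.fst.subtype_val.fst.prodMk hv.snd.subtype_val.snd).subtype_mk _
      d1_r _ := rfl
      d2_r _ := rfl
      d1_s _ := rfl
      d2_s _ := rfl
      d1_t _ := rfl
      d2_t _ := rfl }

end EquSpace

namespace EquHomRep

variable {E F : EquSpace}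

def toSpanHom (h : EquHomRep E F) : SpanHom E.toSubSpan F.toSubSpan where
  f0 := h.toFun
  f1 a := ⟨(h.toFun a.1.1, h.toFun a.1.2), h.preserves _ _ a.2⟩
  cont0 := h.continuous
  cont1 := ((h.continuous.comp continuous_subtype_val.fst).prodMk
    (h.continuous.comp continuous_subtype_val.snd)).subtype_mk _
  comm1 _ := rfl
  comm2 _ := rfl

def interpolate (f g : EquHomRep E F) (p : E.carrier × Bool) : F.carrier :=
  cond p.2 (g.toFun p.1) (f.toFun p.1)

theorem continuous_interpolate (f g : EquHomRep E F) : Continuous (interpolate f g) :=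
  continuous_prod_of_discrete_right.mpr fun
    | false => f.continuous
    | true => g.continuous

theorem interpolate_rel {f g : EquHomRep E F} (hfg : equHomSetoid E F f g) {x y : E.carrier}
    (hxy : E.eqv.r x y) (b c : Bool) :
    F.eqv.r (interpolate f g (x, b)) (interpolate f g (y, c)) := by
  have to_f (z : E.carrier) (b : Bool) : F.eqv.r (interpolate f g (z, b)) (f.toFun z) := by
    cases b
    exacts [F.eqv.refl _, F.eqv.symm (hfg z)]
  exact F.eqv.trans (to_f x b) (F.eqv.trans (f.preserves x y hxy) (F.eqv.symm (to_f y c)))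

def homotopy {f g : EquHomRep E F} (hfg : equHomSetoid E F f g) :
    prodInterval E.toSubSpan ⟶ F.toSubSpan where
  f0 := interpolate f g
  f1 q := ⟨(interpolate f g (q.1.1.1, q.2.1), interpolate f g (q.1.1.2, q.2.2)),
    interpolate_rel hfg q.1.2 _ _⟩
  cont0 := continuous_interpolate f g
  cont1 := (((continuous_interpolate f g).comp
      (continuous_fst.subtype_val.fst.prodMk continuous_snd.fst)).prodMk
    ((continuous_interpolate f g).comp
      (continuous_fst.subtype_val.snd.prodMk continuous_snd.snd))).subtype_mk _
  comm1 _ := rfl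
  comm2 _ := rfl

theorem htpyRel_toSpanHom {f g : EquHomRep E F} (hfg : equHomSetoid E F f g) :
    htpyRel f.toSpanHom g.toSpanHom :=
  ⟨homotopy hfg, fun _ => rfl, fun _ => rfl, fun _ => rfl, fun _ => rfl⟩

end EquHomRep

def equToQuotient : EquSpace ⥤ CategoryTheory.Quotient htpyRel where
  obj E := (Quotient.functor htpyRel).obj E.toSubSpan
  map φ := Quotient.liftOn φ (fun h => (Quotient.functor htpyRel).map h.toSpanHom)
    fun _ _ hfg => CategoryTheory.Quotient.sound htpyRel (EquHomRep.htpyRel_toSpanHom hfg)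
  map_id _ := rfl
  map_comp φ ψ := Quotient.inductionOn₂ φ ψ fun _ _ => rfl

namespace SubSpanCat

variable (A : SubSpanCat)

-- Unique since `A` is subspatial; this is what makes the choice continuous.
noncomputable def arrowOfRel (p : A.toEquSpace.RelPairs) : A.A1 :=
  p.2.choose

theorem endpoints_arrowOfRel (p : A.toEquSpace.RelPairs) :
    (A.d1 (A.arrowOfRel p), A.d2 (A.arrowOfRel p)) = p.1 :=
  Prod.ext p.2.choose_spec.1 p.2.choose_spec.2

theorem arrowOfRel_endpoints (a : A.A1) : A.arrowOfRel ⟨(A.d1 a, A.d2 a), a, rfl, rfl⟩ = a :=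
  A.emb.injective (A.endpoints_arrowOfRel _)

theorem continuous_arrowOfRel : Continuous A.arrowOfRel := by
  rw [A.emb.continuous_iff, Function.comp_def]
  simp_rw [endpoints_arrowOfRel]
  exact continuous_subtype_val

noncomputable def isoToEquSpaceToSubSpan : A ≅ A.toEquSpace.toSubSpan where
  hom :=
    { f0 := id
      f1 a := ⟨(A.d1 a, A.d2 a), a, rfl, rfl⟩
      cont0 := continuous_id
      cont1 := (A.cd1.prodMk A.cd2).subtype_mk _
      comm1 _ := rfl
      comm2 _ := rfl }
  inv :=
    { f0 := id
      f1 := A.arrowOfRel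
      cont0 := continuous_id
      cont1 := A.continuous_arrowOfRel
      comm1 p := congrArg Prod.fst (A.endpoints_arrowOfRel p)
      comm2 p := congrArg Prod.snd (A.endpoints_arrowOfRel p) }
  hom_inv_id := SpanHom.ext rfl (funext A.arrowOfRel_endpoints)
  inv_hom_id := SpanHom.ext rfl (funext fun p => Subtype.ext (A.endpoints_arrowOfRel p))

theorem isoToEquSpaceToSubSpan_hom_natural {A B : SubSpanCat} (h : A ⟶ B) :
    h ≫ B.isoToEquSpaceToSubSpan.hom =
      A.isoToEquSpaceToSubSpan.hom ≫ h.toEquHomRep.toSpanHom :=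
  SpanHom.ext rfl (funext fun a => Subtype.ext (Prod.ext (h.comm1 a) (h.comm2 a)))

end SubSpanCat

def EquSpace.toSubSpanToEquSpaceIso (E : EquSpace) : E.toSubSpan.toEquSpace ≅ E where
  hom := ⟦⟨id, continuous_id, by rintro _ _ ⟨a, rfl, rfl⟩; exact a.2⟩⟧
  inv := ⟦⟨id, continuous_id, fun x y hxy => ⟨⟨(x, y), hxy⟩, rfl, rfl⟩⟩⟧
  hom_inv_id := Quotient.sound fun x => E.toSubSpan.rel.refl x
  inv_hom_id := Quotient.sound fun x => E.eqv.refl x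

/-- the category `Equ` of equilogical spaces is equivalent to
the homotopical quotient of the category `A` of subspatial equivalence spans
on T0 spaces by the interval-like groupoid `𝕀`. -/
theorem equ_is_homotopical_quotient :
    Nonempty (CategoryTheory.Quotient htpyRel ≌ EquSpace) := by
  let Q := Quotient.functor htpyRel
  refine ⟨.mk (CategoryTheory.Quotient.lift htpyRel spanToEqu spanToEqu_map_eq_of_htpyRel) equToQuotient
    (NatIso.ofComponents (fun X => Q.mapIso X.as.isoToEquSpaceToSubSpan) ?_)
    (NatIso.ofComponents EquSpace.toSubSpanToEquSpaceIso ?_)⟩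
  · rintro X Y ⟨h⟩
    show Q.map h ≫ Q.map _ = Q.map _ ≫ Q.map _
    rw [← Q.map_comp, ← Q.map_comp]
    exact congrArg Q.map (SubSpanCat.isoToEquSpaceToSubSpan_hom_natural h)
  · rintro E F ⟨h⟩
    exact Quotient.sound fun x => F.eqv.refl _
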